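/- arXiv:1712.07423 — 2 statements merged into one kernel-verified Lean document; each statement's English description precedes it below -/
import Mathlib

section
/- Let k be an integer. Given finite-dimensional ℂ-vector spaces with subspaces F^k H_C ⊆ H_C and F^k H'_C ⊆ H'_C, a linear map f_C : H_C → H'_C strict for these filtrations (f_C(F^k H_C) = F^k H'_C ∩ f_C(H_C)), vector spaces H_add, H'_add with a map f_add : H_add → H'_add, vector spaces H_inf, H'_inf with a map f_inf : H_inf → H'_inf, and subspaces 𝓕 ⊆ H_C ⊕ H_add ⊕ H_inf and 𝓕' ⊆ H'_C ⊕ H'_add ⊕ H'_inf satisfying (a) the projections 𝓕 → H_inf and 𝓕' → H'_inf are surjective, and (b) 𝓕 ∩ (H_C ⊕ H_add) maps isomorphically onto F^k H_C under projection, and similarly 𝓕' ∩ (H'_C ⊕ H'_add) maps isomorphically onto F^k H'_C, and such that f = f_C ⊕ f_add ⊕ f_inf maps 𝓕 into 𝓕': then f(𝓕) = 𝓕' ∩ f(H_C ⊕ H_add ⊕ H_inf). -/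
/-- key linear-algebra step of strictness in MHSM: given a map
`f_C : H_C → H'_C` strict for the filtrations `F ⊆ H_C`, `F' ⊆ H'_C`, maps
`f_add`, `f_inf` on the additive and infinitesimal parts, and subspaces
`𝓕 ⊆ H_C ⊕ H_add ⊕ H_inf`, `𝓕' ⊆ H'_C ⊕ H'_add ⊕ H'_inf` satisfying
(a) the projections `𝓕 → H_inf`, `𝓕' → H'_inf` are surjective,
(b) `𝓕 ∩ (H_C ⊕ H_add)` maps isomorphically onto `F` under the projection to
`H_C` (injectivity + image `F`), and similarly for `𝓕'`,
and such that `f := f_C ⊕ f_add ⊕ f_inf` maps `𝓕` into `𝓕'`,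
one has `f(𝓕) = 𝓕' ∩ f(𝓗)`. -/
theorem stmt_9
    (HC Hadd Hinf HC' Hadd' Hinf' : Type)
    [AddCommGroup HC] [Module ℂ HC] [AddCommGroup Hadd] [Module ℂ Hadd]
    [AddCommGroup Hinf] [Module ℂ Hinf]
    [AddCommGroup HC'] [Module ℂ HC'] [AddCommGroup Hadd'] [Module ℂ Hadd']
    [AddCommGroup Hinf'] [Module ℂ Hinf']
    [FiniteDimensional ℂ HC] [FiniteDimensional ℂ Hadd] [FiniteDimensional ℂ Hinf]
    [FiniteDimensional ℂ HC'] [FiniteDimensional ℂ Hadd'] [FiniteDimensional ℂ Hinf']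
    (F : Submodule ℂ HC) (F' : Submodule ℂ HC')
    (fC : HC →ₗ[ℂ] HC') (fadd : Hadd →ₗ[ℂ] Hadd') (finf : Hinf →ₗ[ℂ] Hinf')
    -- strictness of `f_C` for the Hodge filtrations
    (hstrict : F.map fC = F' ⊓ LinearMap.range fC)
    (𝓕 : Submodule ℂ (HC × Hadd × Hinf)) (𝓕' : Submodule ℂ (HC' × Hadd' × Hinf'))
    -- (a) the projections `𝓕 → H_inf` and `𝓕' → H'_inf` are surjective
    (ha : ∀ w : Hinf, ∃ z ∈ 𝓕, z.2.2 = w)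
    (ha' : ∀ w : Hinf', ∃ z ∈ 𝓕', z.2.2 = w)
    -- (b) `𝓕 ∩ (H_C ⊕ H_add)` maps isomorphically onto `F` under the projection
    (hb₁ : ∀ v : Hadd, ((0 : HC), v, (0 : Hinf)) ∈ 𝓕 → v = 0)
    (hb₂ : ∀ x : HC, x ∈ F ↔ ∃ v : Hadd, (x, v, (0 : Hinf)) ∈ 𝓕)
    (hb₁' : ∀ v : Hadd', ((0 : HC'), v, (0 : Hinf')) ∈ 𝓕' → v = 0)
    (hb₂' : ∀ x : HC', x ∈ F' ↔ ∃ v : Hadd', (x, v, (0 : Hinf')) ∈ 𝓕')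
    -- `f = f_C ⊕ f_add ⊕ f_inf` maps `𝓕` into `𝓕'`
    (hmap : 𝓕.map (fC.prodMap (fadd.prodMap finf)) ≤ 𝓕') :
    𝓕.map (fC.prodMap (fadd.prodMap finf)) =
      𝓕' ⊓ LinearMap.range (fC.prodMap (fadd.prodMap finf)) := by
  apply le_antisymm
  · exact le_inf hmap (Submodule.map_le_iff_le_comap.mpr
      (fun z _ => LinearMap.mem_range_self _ z))
  · rintro ⟨x', v', w'⟩ ⟨hmem', ⟨x, v, w⟩, hfx⟩
    simp only [LinearMap.prodMap_apply, Prod.mk.injEq] at hfx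
    obtain ⟨hx', hv', hw'⟩ := hfx
    -- choose z ∈ 𝓕 with z.2.2 = w
    obtain ⟨z, hz, hz2⟩ := ha w
    have hfz : (fC z.1, fadd z.2.1, finf z.2.2) ∈ 𝓕' := by
      apply hmap
      exact ⟨z, hz, rfl⟩
    have hdiff : (x' - fC z.1, v' - fadd z.2.1, (0 : Hinf')) ∈ 𝓕' := by
      have := 𝓕'.sub_mem hmem' hfz
      simpa [hz2, hw'] using this
    have hF' : x' - fC z.1 ∈ F' := (hb₂' _).mpr ⟨v' - fadd z.2.1, hdiff⟩
    have hrange : x' - fC z.1 ∈ F' ⊓ LinearMap.range fC := by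
      refine ⟨hF', ⟨x - z.1, ?_⟩⟩
      simp [hx', map_sub]
    rw [← hstrict] at hrange
    obtain ⟨a, haF, hfa⟩ := hrange
    obtain ⟨b, hab⟩ := (hb₂ a).mp haF
    have hfab : (fC a, fadd b, (0 : Hinf')) ∈ 𝓕' := by
      have := hmap ⟨(a, b, 0), hab, rfl⟩
      simpa using this
    have hv0 : v' - fadd z.2.1 - fadd b = 0 := by
      apply hb₁'
      have := 𝓕'.sub_mem hdiff hfab
      simpa [hfa] using this
    rw [sub_sub, sub_eq_zero] at hv0
    refine ⟨z + (a, b, 0), 𝓕.add_mem hz hab, ?_⟩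
    simp only [LinearMap.prodMap_apply, Prod.fst_add, Prod.snd_add, map_add, Prod.mk.injEq]
    have h1 : fC z.1 + fC a = x' := by rw [hfa]; abel
    simp [Prod.ext_iff, h1, hv0, hz2, hw']
end

section
/- Let H_C, H_add, H_inf be finite-dimensional ℂ-vector spaces, 𝓗 = H_C ⊕ H_add ⊕ H_inf, and 𝓕 ⊆ 𝓗 a subspace satisfying the modulus conditions: 𝓗 = 𝓕 + H_C + H_add and H_add ∩ 𝓕 = 0. Define the dual data: 𝓗^∨ = H_C^* ⊕ H_inf^* ⊕ H_add^* and 𝓕^∨ := (𝓗/𝓕)^* viewed as the annihilator of 𝓕 inside 𝓗^* ≅ 𝓗^∨ (with the second and third summands swapped). Then the dual data again satisfies the modulus conditions: 𝓗^∨ = 𝓕^∨ + H_C^* + H_inf^* and H_inf^* ∩ 𝓕^∨ = 0. -/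
/-!
Condition (d) says that `Hadd` embeds into `𝓗 / 𝓕`, so every functional on `Hadd` extends through `𝓗 / 𝓕` to an element of `𝓕^∨`; subtracting such an extension
of `φ|_{Hadd}` from `φ` leaves a functional that only sees `HC ⊕ Hinf`, which splits into an
`HC*`-part and an `Hinf*`-part. Dually, by (c) a functional killing `𝓕`, `HC` and `Hadd` kills
everything.
-/

namespace LinearMap

variable {K V W M : Type*} [Field K] [AddCommGroup V] [Module K V] [AddCommGroup W] [Module K W]
  [AddCommGroup M] [Module K M]

theorem exists_comp_eq_of_forall_mem_eq_zero (F : Submodule K V) (ι : W →ₗ[K] V)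
    (hι : ∀ w, ι w ∈ F → w = 0) (g : W →ₗ[K] M) :
    ∃ ψ : V →ₗ[K] M, (∀ z ∈ F, ψ z = 0) ∧ ψ ∘ₗ ι = g := by
  have hker : ker (F.mkQ ∘ₗ ι) = ⊥ :=
    ker_eq_bot'.2 fun w hw => hι w ((Submodule.Quotient.mk_eq_zero F).1 hw)
  obtain ⟨r, hr⟩ := (F.mkQ ∘ₗ ι).exists_leftInverse_of_injective hker
  refine ⟨g ∘ₗ r ∘ₗ F.mkQ, fun z hz => ?_, ?_⟩
  · simp [(Submodule.Quotient.mk_eq_zero F).2 hz]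
  · rw [comp_assoc, comp_assoc, hr, comp_id]

variable {A B C : Type*} [AddCommGroup A] [Module K A] [AddCommGroup B] [Module K B]
  [AddCommGroup C] [Module K C]

theorem eq_comp_prodMap_add_of_apply_middle_eq_zero (δ : A × B × C →ₗ[K] M)
    (hδ : ∀ v, δ (0, v, 0) = 0) :
    δ = δ ∘ₗ id.prodMap 0 + δ ∘ₗ (0 : A →ₗ[K] A).prodMap (prodMap 0 id) := by
  refine LinearMap.ext fun ⟨x, v, w⟩ => ?_
  calc δ (x, v, w) = δ (x, 0, 0) + δ (0, v, 0) + δ (0, 0, w) := by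
        rw [← map_add, ← map_add]; simp
    _ = _ := by simp [hδ, Prod.mk_zero_zero]

end LinearMap

theorem stmt_13_general
    (HC Hadd Hinf : Type) [AddCommGroup HC] [Module ℂ HC]
    [AddCommGroup Hadd] [Module ℂ Hadd] [AddCommGroup Hinf] [Module ℂ Hinf]
    (𝓕 : Submodule ℂ (HC × Hadd × Hinf))
    (hc : ∀ h : HC × Hadd × Hinf, ∃ f ∈ 𝓕, ∃ (x : HC) (v : Hadd), h = f + (x, v, 0))
    (hd : ∀ v : Hadd, ((0 : HC), v, (0 : Hinf)) ∈ 𝓕 → v = 0) :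
    (∀ φ : (HC × Hadd × Hinf) →ₗ[ℂ] ℂ,
        ∃ ψ χ ξ : (HC × Hadd × Hinf) →ₗ[ℂ] ℂ,
          (∀ z ∈ 𝓕, ψ z = 0) ∧
          (∀ (v : Hadd) (w : Hinf), χ (0, v, w) = 0) ∧
          (∀ (x : HC) (v : Hadd), ξ (x, v, 0) = 0) ∧
          φ = ψ + χ + ξ) ∧
    (∀ φ : (HC × Hadd × Hinf) →ₗ[ℂ] ℂ,
        (∀ z ∈ 𝓕, φ z = 0) → (∀ (x : HC) (v : Hadd), φ (x, v, 0) = 0) → φ = 0) := by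
  refine ⟨fun φ => ?_, fun φ hF hHC => ?_⟩
  · let ι : Hadd →ₗ[ℂ] HC × Hadd × Hinf := .inr ℂ HC _ ∘ₗ .inl ℂ Hadd Hinf
    obtain ⟨ψ, hψF, hψι⟩ := LinearMap.exists_comp_eq_of_forall_mem_eq_zero 𝓕 ι hd (φ ∘ₗ ι)
    have hsplit := (φ - ψ).eq_comp_prodMap_add_of_apply_middle_eq_zero fun v => by
      simpa [ι, sub_eq_zero] using congr($hψι v).symm
    refine ⟨ψ, (φ - ψ) ∘ₗ LinearMap.id.prodMap 0,
      (φ - ψ) ∘ₗ (0 : HC →ₗ[ℂ] HC).prodMap (.prodMap 0 .id), hψF,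
      fun v w => by simp [Prod.mk_zero_zero], fun x v => by simp [Prod.mk_zero_zero], ?_⟩
    rw [add_assoc, ← hsplit, add_sub_cancel]
  · refine LinearMap.ext fun z => ?_
    obtain ⟨f, hf, x, v, rfl⟩ := hc z
    simp [hF f hf, hHC x v]

/-- let `𝓕 ⊆ 𝓗 = HC ⊕ Hadd ⊕ Hinf` satisfy the modulus conditions
(c) `𝓗 = 𝓕 + HC + Hadd` and (d) `Hadd ∩ 𝓕 = 0`. Inside the dual `𝓗* `, let
`𝓕^∨` be the annihilator of `𝓕`, let `HC*` be the functionals vanishing on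
`Hadd ⊕ Hinf`, and `Hinf*` those vanishing on `HC ⊕ Hadd` (in the dual object the
roles of 'add' and 'inf' are swapped: the new add-part is `Hinf*`). Then the dual
data satisfies the modulus conditions again:
`𝓗* = 𝓕^∨ + HC* + Hinf*` and `Hinf* ∩ 𝓕^∨ = 0`. -/
theorem stmt_13
    (HC Hadd Hinf : Type) [AddCommGroup HC] [Module ℂ HC]
    [AddCommGroup Hadd] [Module ℂ Hadd] [AddCommGroup Hinf] [Module ℂ Hinf]
    [FiniteDimensional ℂ HC] [FiniteDimensional ℂ Hadd] [FiniteDimensional ℂ Hinf]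
    (𝓕 : Submodule ℂ (HC × Hadd × Hinf))
    (hc : ∀ h : HC × Hadd × Hinf, ∃ f ∈ 𝓕, ∃ (x : HC) (v : Hadd), h = f + (x, v, 0))
    (hd : ∀ v : Hadd, ((0 : HC), v, (0 : Hinf)) ∈ 𝓕 → v = 0) :
    (∀ φ : (HC × Hadd × Hinf) →ₗ[ℂ] ℂ,
        ∃ ψ χ ξ : (HC × Hadd × Hinf) →ₗ[ℂ] ℂ,
          (∀ z ∈ 𝓕, ψ z = 0) ∧
          (∀ (v : Hadd) (w : Hinf), χ (0, v, w) = 0) ∧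
          (∀ (x : HC) (v : Hadd), ξ (x, v, 0) = 0) ∧
          φ = ψ + χ + ξ) ∧
    (∀ φ : (HC × Hadd × Hinf) →ₗ[ℂ] ℂ,
        (∀ z ∈ 𝓕, φ z = 0) → (∀ (x : HC) (v : Hadd), φ (x, v, 0) = 0) → φ = 0) :=
  stmt_13_general HC Hadd Hinf 𝓕 hc hd
end
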